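/- In the group G_k on (Z/k)^{2k} × Z/k, any product of fewer than k commutators [g_1,g_1'][g_2,g_2']···[g_m,g_m'] with m < k, where each pair satisfies Σ_{i=1}^k (b_i(g_j) a_i(g_j') - b_i(g_j') a_i(g_j)) = 1 in Z/k, is a nontrivial element of G_k; in fact it equals (0,...,0,m) with 0 < m < k. -/

import Mathlib

/-- The group `G_k`: underlying set `(ℤ/k)^{2k} × ℤ/k`, with `a`-coordinates `a 0, …, a (k-1)`,
`b`-coordinates `b 0, …, b (k-1)` and a final coordinate `ε`. -/
@[ext] structure Gk (k : ℕ) where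
  a : Fin k → ZMod k
  b : Fin k → ZMod k
  ε : ZMod k

namespace Gk

variable {k : ℕ}

/-- The twisted multiplication
`(a,b,ε)·(a',b',ε') = (a+a', b+b', ε+ε'+∑ i, b i * a' i)`. -/
def gmul (x y : Gk k) : Gk k :=
  ⟨x.a + y.a, x.b + y.b, x.ε + y.ε + ∑ i, x.b i * y.a i⟩

def ginv (x : Gk k) : Gk k :=
  ⟨-x.a, -x.b, -x.ε + ∑ i, x.b i * x.a i⟩

instance : Group (Gk k) where
  mul := gmul
  one := ⟨0, 0, 0⟩
  inv := ginv
  mul_assoc x y z := by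
    show gmul (gmul x y) z = gmul x (gmul y z)
    simp only [gmul, mk.injEq, Pi.add_apply, add_mul, mul_add, Finset.sum_add_distrib]
    refine ⟨by ring, by ring, by ring⟩
  one_mul x := by
    show gmul ⟨0, 0, 0⟩ x = x
    ext <;> simp [gmul]
  mul_one x := by
    show gmul x ⟨0, 0, 0⟩ = x
    ext <;> simp [gmul]
  inv_mul_cancel x := by
    show gmul (ginv x) x = ⟨0, 0, 0⟩
    simp only [gmul, ginv, mk.injEq, Pi.neg_apply, neg_mul, Finset.sum_neg_distrib]
    refine ⟨by ring, by ring, by ring⟩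

@[simp] theorem mul_def (x y : Gk k) :
    x * y = ⟨x.a + y.a, x.b + y.b, x.ε + y.ε + ∑ i, x.b i * y.a i⟩ := rfl

@[simp] theorem one_def : (1 : Gk k) = ⟨0, 0, 0⟩ := rfl

end Gk

open scoped commutatorElement

/-! Every commutator `⁅x, y⁆` in `G_k` is the central element `(0, 0, ω(x, y))`, where `ω` is the
symplectic pairing, and central elements multiply by adding their last coordinates. Under the
hypothesis the product of the `m` commutators is therefore `(0, 0, m)`, and `m ≠ 0` in `ℤ/k`
because `0 < m < k`. -/

namespace Gk

variable {k : ℕ}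

theorem commutator_eq (x y : Gk k) :
    ⁅x, y⁆ = mk 0 0 (∑ i, (x.b i * y.a i - y.b i * x.a i)) := by
  show x * y * ginv x * ginv y = _
  ext i
  · simp [ginv]
  · simp [ginv]
  · simp only [ginv, mul_def, Pi.add_apply, Pi.neg_apply, add_mul, mul_neg, neg_mul,
      Finset.sum_add_distrib, Finset.sum_neg_distrib, Finset.sum_sub_distrib]
    ring

theorem mk_zero_zero_mul (c d : ZMod k) : mk 0 0 c * mk 0 0 d = mk 0 0 (c + d) := by
  ext <;> simp

theorem prod_ofFn_mk_zero_zero {n : ℕ} (c : Fin n → ZMod k) :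
    (List.ofFn fun j => mk 0 0 (c j)).prod = mk 0 0 (∑ j, c j) := by
  induction n with
  | zero => rfl
  | succ n ih =>
    rw [List.ofFn_succ, List.prod_cons, ih, mk_zero_zero_mul, Fin.sum_univ_succ]

end Gk

/-- Any product of `m < k` commutators `⁅g_1,g_1'⁆⋯⁅g_m,g_m'⁆` in `G_k` whose symplectic
pairings `∑ i (b_i a_i' - b_i' a_i)` are all equal to `1` equals `(0,…,0,m)` and in
particular is a nontrivial element of `G_k`. -/
theorem Gk.prod_commutators_ne_one (k m : ℕ) (hm : 0 < m) (hmk : m < k)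
    (g g' : Fin m → Gk k)
    (hpair : ∀ j, ∑ i, ((g j).b i * (g' j).a i - (g' j).b i * (g j).a i) = 1) :
    (List.ofFn (fun j => ⁅g j, g' j⁆)).prod = Gk.mk 0 0 (m : ZMod k) ∧
      (List.ofFn (fun j => ⁅g j, g' j⁆)).prod ≠ 1 := by
  have hcomm : (fun j => ⁅g j, g' j⁆) = fun _ => Gk.mk 0 0 1 :=
    funext fun j => by rw [Gk.commutator_eq, hpair j]
  have hprod : (List.ofFn (fun j => ⁅g j, g' j⁆)).prod = Gk.mk 0 0 (m : ZMod k) := by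
    rw [hcomm, Gk.prod_ofFn_mk_zero_zero]
    simp
  have hm_ne_zero : (m : ZMod k) ≠ 0 := by
    rw [Ne, ZMod.natCast_eq_zero_iff]
    exact Nat.not_dvd_of_pos_of_lt hm hmk
  refine ⟨hprod, fun h => hm_ne_zero ?_⟩
  simpa [hprod] using congrArg Gk.ε h
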